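/- (Factorial Jacobi–Trudi identity, h-version) For a partition λ with at most p parts, s_λ(x|a) = det[ h_{λ_i − i + j}(x | τ^{1−j}a) ]_{1 ≤ i,j ≤ p}, where h_k(x|a) = s_{(k)}(x|a) is the factorial complete homogeneous function and (τ^s a)_n = a_{n+s}. -/

import Mathlib

open Finset
open scoped Classical

noncomputable section

variable {R : Type*} [CommRing R]

/-- shifted sequence: `(τ^s a)_n = a_{n+s}` -/
def shiftSeq (a : ℤ → R) (s : ℤ) : ℤ → R := fun n => a (n + s)

/-- factorial complete homogeneous function `h_k(x|a)`
    (`= Σ_{1≤i_1≤...≤i_k≤p} ∏_r (x_{i_r} - a_{i_r + r - 1})`, `0` for `k < 0`) -/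
def fh (p : ℕ) (x : Fin p → R) (a : ℤ → R) (k : ℤ) : R :=
  if 0 ≤ k then
    ∑ f ∈ Finset.univ.filter (fun f : Fin k.toNat → Fin p => Monotone f),
      ∏ r : Fin k.toNat, (x (f r) - a (((f r : ℕ) : ℤ) + ((r : ℕ) : ℤ) + 1))
  else 0

/-- factorial elementary function `e_k(x|a)`
    (`= Σ_{1≤i_1<...<i_k≤p} ∏_r (x_{i_r} - a_{i_r - r + 1})`, `0` for `k < 0`;
    it vanishes automatically for `k > p`) -/
def fe (p : ℕ) (x : Fin p → R) (a : ℤ → R) (k : ℤ) : R :=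
  if 0 ≤ k then
    ∑ f ∈ Finset.univ.filter (fun f : Fin k.toNat → Fin p => StrictMono f),
      ∏ r : Fin k.toNat, (x (f r) - a (((f r : ℕ) : ℤ) - ((r : ℕ) : ℤ) + 1))
  else 0

/-- generalized factorial power `(y|a)^k = (y - a_1)⋯(y - a_k)` -/
def gfp (y : R) (a : ℤ → R) (k : ℕ) : R :=
  ∏ i ∈ Finset.range k, (y - a ((i : ℤ) + 1))

/-- the factorial Schur polynomial `s_λ(x|a)`, defined through the factorial
    Jacobi-Trudi determinant `det( h_{λ_i - i + j}(x | τ^{1-j} a) )_{1≤i,j≤p}` -/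
def fschur (p : ℕ) (lam : Fin p → ℕ) (x : Fin p → R) (a : ℤ → R) : R :=
  Matrix.det (Matrix.of fun i j : Fin p =>
    fh p x (shiftSeq a (-((j : ℕ) : ℤ))) (((lam i : ℕ) : ℤ) - ((i : ℕ) : ℤ) + ((j : ℕ) : ℤ)))

/-! The factorial complete function is a divided difference, `h_k(x|b) = Δ((X|b)^(k+p-1))`, where
`Δ P = P[x_1, …, x_p]` is the coefficient of `X^(p-1)` in `P mod ∏ (X - x_i)`: both sides obey the
same recursion in the first variable. So the Jacobi–Trudi matrix is `(Δ(π_k Q_i))_{i,k}` with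
`π_k = (X|τ^(-k) a)^k` and `Q_i = (X|a)^(λ_i+p-1-i)`.

The functionals `P ↦ Δ(π_k P)` kill the multiples of `∏ (X - x_i)` and are unitriangular on the
monomials `X^(p-1-i)`, so evaluation at `x_j` is a fixed combination of them. This gives one matrix
`E` with `(Q_i(x_j)) = (Δ(π_k Q_i)) * E` for every family `Q`. For `λ = 0` the matrix
`(Δ(π_k Q_i))` is again unitriangular, and comparing determinants gives the identity. -/

open Polynomial

theorem fh_of_neg {p : ℕ} (x : Fin p → R) (a : ℤ → R) {k : ℤ} (hk : k < 0) :
    fh p x a k = 0 :=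
  if_neg (not_le.mpr hk)

theorem fh_natCast {p : ℕ} (x : Fin p → R) (a : ℤ → R) (k : ℕ) :
    fh p x a k = ∑ f ∈ univ.filter (fun f : Fin k → Fin p => Monotone f),
      ∏ r : Fin k, (x (f r) - a (((f r : ℕ) : ℤ) + ((r : ℕ) : ℤ) + 1)) := by
  simp [fh]

theorem fh_zero {p : ℕ} (x : Fin p → R) (a : ℤ → R) : fh p x a 0 = 1 := by
  simpa [Subsingleton.monotone] using fh_natCast x a 0

theorem fh_fin_zero (x : Fin 0 → R) (a : ℤ → R) {k : ℤ} (hk : 0 < k) : fh 0 x a k = 0 := by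
  lift k to ℕ using hk.le
  obtain ⟨k, rfl⟩ := Nat.exists_eq_add_one_of_ne_zero (by omega : k ≠ 0)
  rw [fh_natCast]
  simp

theorem sum_monotone_apply_zero_eq_zero {M : Type*} [AddCommMonoid M] {p m : ℕ}
    (F : (Fin (m + 1) → Fin (p + 1)) → M) :
    ∑ f ∈ univ.filter (fun f : Fin (m + 1) → Fin (p + 1) => Monotone f ∧ f 0 = 0), F f =
      ∑ g ∈ univ.filter (fun g : Fin m → Fin (p + 1) => Monotone g), F (Fin.cons 0 g) := by
  refine Finset.sum_nbij' Fin.tail (fun g => Fin.cons 0 g) ?_ ?_ ?_ ?_ (fun f hf => ?_)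
  · intro f hf
    simp only [mem_filter, mem_univ, true_and] at hf ⊢
    exact hf.1.comp Fin.strictMono_succ.monotone
  · intro g hg
    simp only [mem_filter, mem_univ, true_and] at hg ⊢
    refine ⟨monotone_iff_forall_lt.mpr ?_, rfl⟩
    exact (Fin.liftFun_cons _).mpr ⟨fun i => Fin.zero_le _, monotone_iff_forall_lt.mp hg⟩
  · intro f hf
    simp only [mem_filter, mem_univ, true_and] at hf
    rw [← hf.2]
    exact Fin.cons_self_tail f
  · intro g _
    exact Fin.tail_cons _ _
  · simp only [mem_filter, mem_univ, true_and] at hf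
    rw [← hf.2]
    exact congrArg F (Fin.cons_self_tail f).symm

theorem sum_monotone_apply_zero_ne_zero {M : Type*} [AddCommMonoid M] {p m : ℕ}
    (F : (Fin (m + 1) → Fin (p + 1)) → M) :
    ∑ f ∈ univ.filter (fun f : Fin (m + 1) → Fin (p + 1) => Monotone f ∧ f 0 ≠ 0), F f =
      ∑ g ∈ univ.filter (fun g : Fin (m + 1) → Fin p => Monotone g), F (Fin.succ ∘ g) := by
  symm
  refine Finset.sum_bij (fun g _ => Fin.succ ∘ g) ?_ ?_ ?_ (fun _ _ => rfl)
  · intro g hg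
    simp only [mem_filter, mem_univ, true_and] at hg ⊢
    exact ⟨Fin.strictMono_succ.monotone.comp hg, Fin.succ_ne_zero _⟩
  · intro g _ g' _ h
    exact funext fun r => Fin.succ_injective _ (congrFun h r)
  · intro f hf
    simp only [mem_filter, mem_univ, true_and] at hf
    have hf0 (r : Fin (m + 1)) : f r ≠ 0 :=
      Fin.pos_iff_ne_zero.mp ((Fin.pos_iff_ne_zero.mpr hf.2).trans_le (hf.1 (Fin.zero_le r)))
    choose g hg using fun r => Fin.exists_succ_eq.mpr (hf0 r)
    refine ⟨g, ?_, funext hg⟩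
    simp only [mem_filter, mem_univ, true_and]
    intro r s hrs
    simpa [← hg] using hf.1 hrs

theorem fh_succ {p : ℕ} (x : Fin (p + 1) → R) (a : ℤ → R) (k : ℤ) :
    fh (p + 1) x a k =
      (x 0 - a 1) * fh (p + 1) x (shiftSeq a 1) (k - 1) + fh p (Fin.tail x) (shiftSeq a 1) k := by
  obtain hk | rfl | hk := lt_trichotomy k 0
  · rw [fh_of_neg _ _ hk, fh_of_neg _ _ (by omega), fh_of_neg _ _ hk, mul_zero, add_zero]
  · rw [fh_zero, fh_zero, fh_of_neg _ _ (by omega), mul_zero, zero_add]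
  obtain ⟨m, rfl⟩ : ∃ m : ℕ, k = (m + 1 : ℕ) := ⟨k.toNat - 1, by omega⟩
  rw [show ((m + 1 : ℕ) : ℤ) - 1 = m by push_cast; ring, fh_natCast, fh_natCast, fh_natCast,
    ← sum_filter_add_sum_filter_not _ (fun f => f 0 = 0), filter_filter, filter_filter,
    sum_monotone_apply_zero_eq_zero, sum_monotone_apply_zero_ne_zero, mul_sum]
  congr 1
  · refine sum_congr rfl fun g _ => ?_
    rw [Fin.prod_univ_succ]
    simp only [Fin.cons_zero, Fin.cons_succ, Fin.val_zero, Fin.val_succ, shiftSeq]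
    push_cast
    ring_nf
  · refine sum_congr rfl fun g _ => prod_congr rfl fun r _ => ?_
    simp only [Function.comp_apply, Fin.tail, Fin.val_succ, shiftSeq]
    push_cast
    ring_nf

theorem Polynomial.mul_modByMonic_mul {f g : R[X]} (hf : f.Monic) (hg : g.Monic) (Q : R[X]) :
    (f * Q) %ₘ (f * g) = f * (Q %ₘ g) := by
  nontriviality R
  refine (div_modByMonic_unique (Q /ₘ g) _ (hf.mul hg) ⟨?_, ?_⟩).2
  · rw [mul_assoc, ← mul_add, modByMonic_add_div Q g]
  · rw [mul_comm f, mul_comm f, hf.degree_mul, hf.degree_mul]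
    exact WithBot.add_lt_add_right (degree_eq_bot.not.mpr hf.ne_zero) (degree_modByMonic_lt Q hg)

def gfpPoly (a : ℤ → R) (n : ℕ) : R[X] :=
  ∏ i ∈ range n, (X - C (a ((i : ℤ) + 1)))

theorem eval_gfpPoly (y : R) (a : ℤ → R) (n : ℕ) : (gfpPoly a n).eval y = gfp y a n := by
  simp [gfpPoly, gfp, eval_prod]

theorem gfpPoly_monic (a : ℤ → R) (n : ℕ) : (gfpPoly a n).Monic :=
  monic_prod_of_monic _ _ fun i _ => monic_X_sub_C (a ((i : ℤ) + 1))

theorem natDegree_gfpPoly [Nontrivial R] (a : ℤ → R) (n : ℕ) : (gfpPoly a n).natDegree = n := by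
  rw [gfpPoly, natDegree_prod_of_monic _ _ fun (i : ℕ) _ => monic_X_sub_C (a ((i : ℤ) + 1))]
  simp

theorem gfpPoly_add (a : ℤ → R) (s t : ℕ) :
    gfpPoly a (s + t) = gfpPoly a s * gfpPoly (shiftSeq a s) t := by
  rw [gfpPoly, prod_range_add]
  congr 1
  refine prod_congr rfl fun i _ => ?_
  simp only [shiftSeq]
  push_cast
  ring_nf

theorem gfpPoly_succ (a : ℤ → R) (n : ℕ) :
    gfpPoly a (n + 1) = (X - C (a 1)) * gfpPoly (shiftSeq a 1) n := by
  rw [add_comm, gfpPoly_add]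
  simp [gfpPoly]

theorem gfpPoly_shiftSeq_neg_mul (a : ℤ → R) (k m : ℕ) :
    gfpPoly (shiftSeq a (-k)) k * gfpPoly a m = gfpPoly (shiftSeq a (-k)) (k + m) := by
  rw [gfpPoly_add]
  congr
  funext n
  simp [shiftSeq]

/-- The divided difference `P[x_0, …, x_{p-1}]` (confluent where nodes repeat). At `p = 0` the
truncated `p - 1` is harmless, as the remainder modulo `1` is `0`. -/
def divDiff {p : ℕ} (x : Fin p → R) : R[X] →ₗ[R] R :=
  lcoeff R (p - 1) ∘ₗ modByMonicHom (Lagrange.nodal univ x)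

theorem divDiff_apply {p : ℕ} (x : Fin p → R) (P : R[X]) :
    divDiff x P = (P %ₘ Lagrange.nodal univ x).coeff (p - 1) :=
  rfl

theorem divDiff_fin_zero (x : Fin 0 → R) (P : R[X]) : divDiff x P = 0 := by
  simp [divDiff_apply, Lagrange.nodal]

theorem divDiff_nodal_mul {p : ℕ} (x : Fin p → R) (Q : R[X]) :
    divDiff x (Lagrange.nodal univ x * Q) = 0 := by
  rw [divDiff_apply, self_mul_modByMonic Lagrange.nodal_monic, coeff_zero]

theorem divDiff_eq_coeff {p : ℕ} (x : Fin p → R) {P : R[X]} (hP : P.natDegree < p) :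
    divDiff x P = P.coeff (p - 1) := by
  nontriviality R
  rw [divDiff_apply, (modByMonic_eq_self_iff Lagrange.nodal_monic).mpr]
  rw [Lagrange.degree_nodal, card_univ, Fintype.card_fin]
  exact degree_le_natDegree.trans_lt (by exact_mod_cast hP)

theorem divDiff_X_sub_C_mul {p : ℕ} (x : Fin (p + 1) → R) (Q : R[X]) :
    divDiff x ((X - C (x 0)) * Q) = divDiff (Fin.tail x) Q := by
  have hnodal : Lagrange.nodal univ x = (X - C (x 0)) * Lagrange.nodal univ (Fin.tail x) :=
    Fin.prod_univ_succ _
  rw [divDiff_apply, divDiff_apply, hnodal,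
    mul_modByMonic_mul (monic_X_sub_C _) Lagrange.nodal_monic, Nat.add_sub_cancel]
  cases p with
  | zero => simp [Lagrange.nodal]
  | succ q =>
    rw [coeff_X_sub_C_mul, Nat.add_sub_cancel, coeff_eq_zero_of_degree_lt (n := q + 1), mul_zero,
      sub_zero]
    nontriviality R
    refine (degree_modByMonic_lt Q Lagrange.nodal_monic).trans_eq ?_
    simp

theorem fh_eq_divDiff {p : ℕ} (x : Fin p → R) (b : ℤ → R) (n : ℕ) :
    fh p x b (n + 1 - p) = divDiff x (gfpPoly b n) := by
  induction p generalizing b n with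
  | zero => rw [divDiff_fin_zero, fh_fin_zero _ _ (by omega)]
  | succ p ihp =>
    induction n generalizing b with
    | zero =>
      rw [gfpPoly, prod_range_zero, divDiff_eq_coeff _ (by simp), coeff_one]
      cases p with
      | zero => simp [fh_zero]
      | succ p => rw [fh_of_neg _ _ (by omega), if_neg (by omega)]
    | succ n ihn =>
      have hsplit : X - C (b 1) = (X - C (x 0)) + C (x 0 - b 1) := by
        rw [C_sub]
        ring
      rw [gfpPoly_succ, hsplit, add_mul, map_add, divDiff_X_sub_C_mul, C_mul', map_smul,
        smul_eq_mul, ← ihp, ← ihn, fh_succ]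
      push_cast
      ring_nf

theorem Polynomial.linearMap_ext_of_monic [Nontrivial R] {M : Type*} [AddCommMonoid M]
    [Module R M] {f : R[X]} (hf : f.Monic) {φ ψ : R[X] →ₗ[R] M} (hmul : ∀ Q, φ (f * Q) = ψ (f * Q))
    (hpow : ∀ l < f.natDegree, φ (X ^ l) = ψ (X ^ l)) : φ = ψ := by
  refine LinearMap.ext fun P => ?_
  rw [← modByMonic_add_div P f, map_add, map_add, hmul]
  congr 1
  have hmem : P %ₘ f ∈ degreeLT R f.natDegree :=
    mem_degreeLT.mpr ((degree_modByMonic_lt P hf).trans_le degree_le_natDegree)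
  rw [degreeLT_eq_span_X_pow] at hmem
  refine LinearMap.eqOn_span' (fun q hq => ?_) hmem
  obtain ⟨l, hl, rfl⟩ : ∃ l < f.natDegree, X ^ l = q := by simpa using hq
  exact hpow l hl

section divDiffMatrix

variable {p : ℕ} (x : Fin p → R)

def divDiffMatrix (π Q : Fin p → R[X]) : Matrix (Fin p) (Fin p) R :=
  Matrix.of fun i k => divDiff x (π k * Q i)

theorem det_divDiffMatrix [Nontrivial R] {π Q : Fin p → R[X]} (hπ : ∀ k, (π k).Monic)
    (hπd : ∀ k, (π k).natDegree = k) (hQ : ∀ i, (Q i).Monic)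
    (hQd : ∀ i, (Q i).natDegree = p - 1 - i) : (divDiffMatrix x π Q).det = 1 := by
  have hdeg (i k : Fin p) : (π k * Q i).natDegree = k + (p - 1 - i) := by
    rw [(hπ k).natDegree_mul (hQ i), hπd, hQd]
  have hupper : (divDiffMatrix x π Q).IsUpperTriangular := by
    intro i k hki
    have hki : (k : ℕ) < i := hki
    have := hdeg i k
    rw [divDiffMatrix, Matrix.of_apply, divDiff_eq_coeff _ (by omega),
      coeff_eq_zero_of_natDegree_lt (by omega)]
  rw [Matrix.det_of_isUpperTriangular hupper]
  refine prod_eq_one fun i _ => ?_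
  have hi := i.isLt
  have := hdeg i i
  rw [divDiffMatrix, Matrix.of_apply, divDiff_eq_coeff _ (by omega),
    show p - 1 = (π i * Q i).natDegree by omega]
  exact ((hπ i).mul (hQ i)).coeff_natDegree

theorem exists_divDiffMatrix_mul_eq [Nontrivial R] {π : Fin p → R[X]} (hπ : ∀ k, (π k).Monic)
    (hπd : ∀ k, (π k).natDegree = k) :
    ∃ E : Matrix (Fin p) (Fin p) R, ∀ Q : Fin p → R[X],
      divDiffMatrix x π Q * E = Matrix.of fun i j => (Q i).eval (x j) := by
  set N := divDiffMatrix x π fun i => X ^ (p - 1 - (i : ℕ))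
  set B : Matrix (Fin p) (Fin p) R := Matrix.of fun i j => x j ^ (p - 1 - (i : ℕ))
  have hN : IsUnit N.det := by
    rw [det_divDiffMatrix x hπ hπd (fun _ => monic_X_pow _) (fun _ => natDegree_X_pow _)]
    exact isUnit_one
  set E := N⁻¹ * B
  have hNE : N * E = B := Matrix.mul_nonsing_inv_cancel_left N B hN
  refine ⟨E, fun Q => ?_⟩
  ext i j
  have key : ∑ k, E k j • (divDiff x ∘ₗ LinearMap.mulLeft R (π k)) = leval (x j) := by
    refine linearMap_ext_of_monic (Lagrange.nodal_monic (s := univ) (v := x)) (fun Q => ?_)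
      (fun l hl => ?_)
    · simp [mul_left_comm _ (Lagrange.nodal univ x), divDiff_nodal_mul,
        Lagrange.eval_nodal_at_node (mem_univ j)]
    · rw [Lagrange.natDegree_nodal, card_univ, Fintype.card_fin] at hl
      have hrow := congrFun (congrFun hNE ⟨p - 1 - l, by omega⟩) j
      simp only [N, B, divDiffMatrix, Matrix.mul_apply, Matrix.of_apply,
        show p - 1 - (p - 1 - l) = l by omega] at hrow
      simpa [mul_comm] using hrow
  simpa [divDiffMatrix, Matrix.mul_apply, mul_comm] using LinearMap.congr_fun key (Q i)

end divDiffMatrix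

theorem factorial_jacobiTrudi_h_general (p : ℕ) (x : Fin p → R) (a : ℤ → R)
    (lam : Fin p → ℕ) :
    Matrix.det (Matrix.of fun i j : Fin p => gfp (x j) a (p - 1 - (i : ℕ))) *
        fschur p lam x a =
      Matrix.det (Matrix.of fun i j : Fin p => gfp (x j) a (lam i + (p - 1 - (i : ℕ)))) := by
  nontriviality R
  set π : Fin p → R[X] := fun k => gfpPoly (shiftSeq a (-(k : ℕ))) k
  have hπ (k : Fin p) : (π k).Monic := gfpPoly_monic _ _
  have hπd (k : Fin p) : (π k).natDegree = k := natDegree_gfpPoly _ _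
  obtain ⟨E, hE⟩ := exists_divDiffMatrix_mul_eq x hπ hπd
  have hA (m : Fin p → ℕ) : (Matrix.of fun i j => gfp (x j) a (m i)) =
      divDiffMatrix x π (fun i => gfpPoly a (m i)) * E := by
    simp [hE, eval_gfpPoly]
  have hH : fschur p lam x a =
      (divDiffMatrix x π fun i => gfpPoly a (lam i + (p - 1 - (i : ℕ)))).det := by
    rw [fschur]
    congr 1
    ext i k
    rw [divDiffMatrix, Matrix.of_apply, Matrix.of_apply, gfpPoly_shiftSeq_neg_mul,
      ← fh_eq_divDiff]
    congr 1
    omega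
  rw [hA (fun i => p - 1 - i), hA (fun i => lam i + (p - 1 - i)), hH, Matrix.det_mul,
    Matrix.det_mul, det_divDiffMatrix x hπ hπd (fun _ => gfpPoly_monic _ _)
      (fun _ => natDegree_gfpPoly _ _), one_mul, mul_comm]

/-- (Factorial Jacobi-Trudi, h-version.)  The factorial Schur function,
    i.e. the ratio `det[(x_j|a)^{λ_i+p-i}] / det[(x_j|a)^{p-i}]`, equals the determinant
    `det[h_{λ_i-i+j}(x|τ^{1-j}a)]`; equivalently (clearing the denominator):
    `det[(x_j|a)^{p-i}] · det[h_{λ_i-i+j}(x|τ^{1-j}a)] = det[(x_j|a)^{λ_i+p-i}]`. -/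
theorem factorial_jacobiTrudi_h (p : ℕ) (x : Fin p → R) (a : ℤ → R)
    (lam : Fin p → ℕ) (hlam : Antitone lam) :
    Matrix.det (Matrix.of fun i j : Fin p => gfp (x j) a (p - 1 - (i : ℕ))) *
        fschur p lam x a =
      Matrix.det (Matrix.of fun i j : Fin p => gfp (x j) a (lam i + (p - 1 - (i : ℕ)))) :=
  factorial_jacobiTrudi_h_general p x a lam
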